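/- Let p ∈ (0, 1/2], α₀ := (1−p)/2, β₀ := p/2, and let π be the pmf on {0,1} × {0,1} with π(x,y) = α₀ if x = y and π(x,y) = β₀ if x ≠ y. Let α, β ∈ [0,1], let P_X be the pmf on {0,1} with P_X(0) = α, and P_Y the pmf with P_Y(0) = β. Then 𝓗(P_X, P_Y ‖ π) = log(1/α₀) + min{α + β, (1−α) + (1−β)} · log(α₀/β₀). -/

import Mathlib

/-!
Since `π` takes one value `α₀` on the diagonal and a smaller value `β₀` off it, the
cross-entropy of a coupling `Q` is `log (1/α₀) + Q(X ≠ Y) · log (α₀/β₀)`, an increasing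
function of the off-diagonal mass `Q(X ≠ Y)`. For binary marginals
`Q(X ≠ Y) = α + β - 2 Q(0,0) = (1 - α) + (1 - β) - 2 Q(1,1)`, so the largest off-diagonal mass
is `min {α + β, (1 - α) + (1 - β)}`, attained by making `Q(0,0)` or `Q(1,1)` vanish.
-/

open scoped BigOperators

/-- `log(1/t)` with values in the extended reals: `+∞` when `t = 0`. -/
noncomputable def negLogE (t : ℝ) : EReal :=
  if t = 0 then (⊤ : EReal) else ((Real.log t⁻¹ : ℝ) : EReal)

/-- `Q` is a coupling of the pmfs `PX` and `PY`. -/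
def IsCoupling {X Y : Type*} [Fintype X] [Fintype Y]
    (PX : X → ℝ) (PY : Y → ℝ) (Q : X × Y → ℝ) : Prop :=
  (∀ p, 0 ≤ Q p) ∧ (∀ x, ∑ y, Q (x, y) = PX x) ∧ (∀ y, ∑ x, Q (x, y) = PY y)

/-- The maximal cross-entropy `𝓗(PX, PY ‖ π)`, with values in the extended reals. -/
noncomputable def maxCrossEnt {X Y : Type*} [Fintype X] [Fintype Y]
    (PX : X → ℝ) (PY : Y → ℝ) (π : X × Y → ℝ) : EReal :=
  sSup {s : EReal | ∃ Q, IsCoupling PX PY Q ∧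
    s = ∑ p : X × Y, (Q p : EReal) * negLogE (π p)}

/-- Shannon entropy `H(P) = ∑ P(x) log(1/P(x))` (with `0 · log (1/0) = 0`). -/
noncomputable def entropy {X : Type*} [Fintype X] (P : X → ℝ) : ℝ :=
  ∑ x, P x * Real.log (P x)⁻¹

open Finset

theorem EReal.coe_finset_sum {ι : Type*} (s : Finset ι) (f : ι → ℝ) :
    ((∑ i ∈ s, f i : ℝ) : EReal) = ∑ i ∈ s, (f i : EReal) :=
  map_sum (⟨⟨Real.toEReal, EReal.coe_zero⟩, EReal.coe_add⟩ : ℝ →+ EReal) f s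

theorem negLogE_of_ne_zero {t : ℝ} (ht : t ≠ 0) : negLogE t = ((Real.log t⁻¹ : ℝ) : EReal) :=
  if_neg ht

theorem IsCoupling.sum_eq {X Y : Type*} [Fintype X] [Fintype Y]
    {PX : X → ℝ} {PY : Y → ℝ} {Q : X × Y → ℝ} (hQ : IsCoupling PX PY Q) :
    ∑ q, Q q = ∑ x, PX x := by
  rw [Fintype.sum_prod_type]
  exact sum_congr rfl fun x _ => hQ.2.1 x

section OffDiagonal

variable {X : Type*} [Fintype X] [DecidableEq X]

def offDiagMass (Q : X × X → ℝ) : ℝ :=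
  ∑ q with q.1 ≠ q.2, Q q

theorem sum_mul_negLogE_diag_offDiag (Q : X × X → ℝ) {a b : ℝ} (ha : a ≠ 0) (hb : b ≠ 0) :
    ∑ q, (Q q : EReal) * negLogE (if q.1 = q.2 then a else b) =
      (((∑ q, Q q) * Real.log a⁻¹ + offDiagMass Q * Real.log (a / b) : ℝ) : EReal) := by
  have hlog_b : Real.log b⁻¹ = Real.log a⁻¹ + Real.log (a / b) := by
    rw [Real.log_div ha hb, Real.log_inv, Real.log_inv]; ring
  have hterm : ∀ q : X × X, Q q * Real.log (if q.1 = q.2 then a else b)⁻¹ =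
      Q q * Real.log a⁻¹ + (if q.1 ≠ q.2 then Q q else 0) * Real.log (a / b) := by
    intro q
    by_cases hq : q.1 = q.2 <;> simp [hq, hlog_b, mul_add]
  rw [offDiagMass, sum_filter, sum_mul, sum_mul, ← sum_add_distrib, EReal.coe_finset_sum]
  refine sum_congr rfl fun q _ => ?_
  rw [← hterm, EReal.coe_mul, negLogE_of_ne_zero (by split_ifs <;> assumption)]

theorem maxCrossEnt_diag_offDiag {PX PY : X → ℝ} (hPX : ∑ x, PX x = 1) {a b m : ℝ}
    (hb : 0 < b) (hba : b ≤ a)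
    (hm : IsGreatest {t | ∃ Q, IsCoupling PX PY Q ∧ offDiagMass Q = t} m) :
    maxCrossEnt PX PY (fun q => if q.1 = q.2 then a else b) =
      ((Real.log a⁻¹ + m * Real.log (a / b) : ℝ) : EReal) := by
  set f : ℝ → EReal := fun t => ((Real.log a⁻¹ + t * Real.log (a / b) : ℝ) : EReal)
  have hf : Monotone f := fun s t hst => EReal.coe_le_coe_iff.mpr <|
    add_le_add_right (mul_le_mul_of_nonneg_right hst
      (Real.log_nonneg ((one_le_div hb).mpr hba))) _
  have hvalue : ∀ Q, IsCoupling PX PY Q →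
      ∑ q, (Q q : EReal) * negLogE (if q.1 = q.2 then a else b) = f (offDiagMass Q) := by
    intro Q hQ
    rw [sum_mul_negLogE_diag_offDiag Q (hb.trans_le hba).ne' hb.ne', hQ.sum_eq, hPX, one_mul]
  have hset : {s : EReal | ∃ Q, IsCoupling PX PY Q ∧
      s = ∑ q, (Q q : EReal) * negLogE (if q.1 = q.2 then a else b)} =
      f '' {t | ∃ Q, IsCoupling PX PY Q ∧ offDiagMass Q = t} := by
    ext s
    constructor
    · rintro ⟨Q, hQ, rfl⟩
      exact ⟨offDiagMass Q, ⟨Q, hQ, rfl⟩, (hvalue Q hQ).symm⟩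
    · rintro ⟨_, ⟨Q, hQ, rfl⟩, rfl⟩
      exact ⟨Q, hQ, (hvalue Q hQ).symm⟩
  rw [maxCrossEnt, hset]
  exact (hf.map_isGreatest hm).csSup_eq

end OffDiagonal

def binaryPMF (α : ℝ) : Fin 2 → ℝ := fun x => if x = 0 then α else 1 - α

theorem offDiagMass_fin_two (Q : Fin 2 × Fin 2 → ℝ) : offDiagMass Q = Q (0, 1) + Q (1, 0) := by
  rw [offDiagMass, sum_filter, Fintype.sum_prod_type]
  simp [Fin.sum_univ_two]

theorem IsCoupling.offDiagMass_le_binary {α β : ℝ} {Q : Fin 2 × Fin 2 → ℝ}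
    (hQ : IsCoupling (binaryPMF α) (binaryPMF β) Q) :
    offDiagMass Q ≤ min (α + β) ((1 - α) + (1 - β)) := by
  obtain ⟨hQ0, hQX, hQY⟩ := hQ
  have hrow0 := hQX 0
  have hrow1 := hQX 1
  have hcol0 := hQY 0
  have hcol1 := hQY 1
  simp [binaryPMF, Fin.sum_univ_two] at hrow0 hrow1 hcol0 hcol1
  rw [offDiagMass_fin_two]
  exact le_min (by linarith [hQ0 (0, 0)]) (by linarith [hQ0 (1, 1)])

/-- The coupling of `binaryPMF α` and `binaryPMF β` with the least diagonal mass. -/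
noncomputable def binaryMaxOffDiagCoupling (α β : ℝ) : Fin 2 × Fin 2 → ℝ :=
  let t := max 0 (α + β - 1)
  fun q => if q = (0, 0) then t else if q = (0, 1) then α - t
    else if q = (1, 0) then β - t else 1 - α - β + t

theorem isCoupling_binaryMaxOffDiagCoupling {α β : ℝ} (hα : α ∈ Set.Icc (0 : ℝ) 1)
    (hβ : β ∈ Set.Icc (0 : ℝ) 1) :
    IsCoupling (binaryPMF α) (binaryPMF β) (binaryMaxOffDiagCoupling α β) := by
  obtain ⟨hα0, hα1⟩ := hα
  obtain ⟨hβ0, hβ1⟩ := hβ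
  have ht0 : 0 ≤ max 0 (α + β - 1) := le_max_left _ _
  have ht1 : α + β - 1 ≤ max 0 (α + β - 1) := le_max_right _ _
  have htα : max 0 (α + β - 1) ≤ α := max_le hα0 (by linarith)
  have htβ : max 0 (α + β - 1) ≤ β := max_le hβ0 (by linarith)
  refine ⟨?_, ?_, ?_⟩
  · intro q
    simp only [binaryMaxOffDiagCoupling]
    split_ifs <;> linarith
  · intro x
    fin_cases x <;> simp [binaryMaxOffDiagCoupling, binaryPMF, Fin.sum_univ_two]
  · intro y
    fin_cases y
    · simp [binaryMaxOffDiagCoupling, binaryPMF, Fin.sum_univ_two]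
    · simp [binaryMaxOffDiagCoupling, binaryPMF, Fin.sum_univ_two]
      ring

theorem offDiagMass_binaryMaxOffDiagCoupling (α β : ℝ) :
    offDiagMass (binaryMaxOffDiagCoupling α β) = min (α + β) ((1 - α) + (1 - β)) := by
  rw [offDiagMass_fin_two]
  simp only [binaryMaxOffDiagCoupling]
  norm_num [Prod.ext_iff]
  rcases le_total (α + β - 1) 0 with h | h
  · rw [max_eq_left h, min_eq_left (by linarith)]; ring
  · rw [max_eq_right h, min_eq_right (by linarith)]; ring

theorem isGreatest_offDiagMass_binary {α β : ℝ} (hα : α ∈ Set.Icc (0 : ℝ) 1)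
    (hβ : β ∈ Set.Icc (0 : ℝ) 1) :
    IsGreatest {t | ∃ Q, IsCoupling (binaryPMF α) (binaryPMF β) Q ∧ offDiagMass Q = t}
      (min (α + β) ((1 - α) + (1 - β))) :=
  ⟨⟨_, isCoupling_binaryMaxOffDiagCoupling hα hβ, offDiagMass_binaryMaxOffDiagCoupling α β⟩,
    fun _ ⟨_, hQ, hQt⟩ => hQt ▸ hQ.offDiagMass_le_binary⟩

/-- maximal cross-entropy for the DSBS against arbitrary binary marginals:
`𝓗(P_X, P_Y ‖ π) = log(1/α₀) + min{α+β, (1−α)+(1−β)} log(α₀/β₀)`. -/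
theorem stmt_4 (p : ℝ) (hp0 : 0 < p) (hp2 : p ≤ 1 / 2)
    (α β : ℝ) (hα : α ∈ Set.Icc (0 : ℝ) 1) (hβ : β ∈ Set.Icc (0 : ℝ) 1) :
    maxCrossEnt (fun x : Fin 2 => if x = 0 then α else 1 - α)
        (fun y : Fin 2 => if y = 0 then β else 1 - β)
        (fun q : Fin 2 × Fin 2 => if q.1 = q.2 then (1 - p) / 2 else p / 2)
      = ((Real.log ((1 - p) / 2)⁻¹
          + min (α + β) ((1 - α) + (1 - β)) * Real.log (((1 - p) / 2) / (p / 2)) : ℝ)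
          : EReal) :=
  maxCrossEnt_diag_offDiag (PX := binaryPMF α) (by simp [binaryPMF, Fin.sum_univ_two])
    (by linarith) (by linarith) (isGreatest_offDiagMass_binary hα hβ)
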